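/- arXiv:2111.09290 — 6 statements merged into one kernel-verified Lean document; each statement's English description precedes it below -/
import Mathlib

section
/- Let G=(V,E) be a multigraph, let x ∈ K_TSP(G), and let r ∈ V. Then the restriction of x to the edges with both endpoints in V∖{r} belongs to the spanning tree polytope K_ST(G[V∖{r}]) of the induced multigraph G[V∖{r}] on vertex set V∖{r} and edge set E(V∖{r}). -/
open Finset

/-- The cut `∂S`: edges of the multigraph (given by its endpoint map `ends`,
with distinct endpoints) having exactly one endpoint in `S`. -/
def cut {V E : Type*} [Fintype E] [DecidableEq V] (ends : E → V × V) (S : Finset V) :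
    Finset E :=
  Finset.univ.filter fun e =>
    ((ends e).1 ∈ S ∧ (ends e).2 ∉ S) ∨ ((ends e).2 ∈ S ∧ (ends e).1 ∉ S)

/-- `E(S)`: edges with both endpoints in `S`. -/
def edgesIn {V E : Type*} [Fintype E] [DecidableEq V] (ends : E → V × V) (S : Finset V) :
    Finset E :=
  Finset.univ.filter fun e => (ends e).1 ∈ S ∧ (ends e).2 ∈ S

/-- Membership in the subtour elimination polytope `K_TSP(G)`. -/
def memKTSP {V E : Type*} [Fintype V] [Fintype E] [DecidableEq V]
    (ends : E → V × V) (x : E → ℝ) : Prop :=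
  (∀ e, 0 ≤ x e) ∧
  (∀ v : V, ∑ e ∈ cut ends {v}, x e = 2) ∧
  (∀ S : Finset V, 1 < S.card → S.card < Fintype.card V - 1 →
    2 ≤ ∑ e ∈ cut ends S, x e)

lemma degree_sum {V E : Type*} [Fintype V] [DecidableEq V] [Fintype E]
    (ends : E → V × V) (hloop : ∀ e, (ends e).1 ≠ (ends e).2)
    (x : E → ℝ) (S : Finset V) :
    ∑ v ∈ S, ∑ e ∈ cut ends {v}, x e
      = 2 * ∑ e ∈ edgesIn ends S, x e + ∑ e ∈ cut ends S, x e := by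
  have lhs : ∀ v ∈ S, ∑ e ∈ cut ends {v}, x e
      = ∑ e : E, ((if (ends e).1 = v then x e else 0) + (if (ends e).2 = v then x e else 0)) := by
    intro v _
    rw [cut, Finset.sum_filter]
    refine Finset.sum_congr rfl fun e _ => ?_
    have h := hloop e
    simp only [Finset.mem_singleton]
    by_cases h1 : (ends e).1 = v <;> by_cases h2 : (ends e).2 = v <;>
      simp [h1, h2]
    exact absurd (h1.trans h2.symm) h
  rw [Finset.sum_congr rfl lhs, Finset.sum_comm]
  have inner : ∀ e : E, ∑ v ∈ S, ((if (ends e).1 = v then x e else 0) + (if (ends e).2 = v then x e else 0))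
      = (if (ends e).1 ∈ S then x e else 0) + (if (ends e).2 ∈ S then x e else 0) := by
    intro e
    rw [Finset.sum_add_distrib, Finset.sum_ite_eq, Finset.sum_ite_eq]
  rw [Finset.sum_congr rfl (fun e _ => inner e)]
  rw [edgesIn, cut, Finset.sum_filter, Finset.sum_filter, Finset.mul_sum, ← Finset.sum_add_distrib]
  refine Finset.sum_congr rfl fun e _ => ?_
  by_cases h1 : (ends e).1 ∈ S <;> by_cases h2 : (ends e).2 ∈ S <;> simp [h1, h2] <;> ring

/-- If `x ∈ K_TSP(G)` and `r ∈ V`, then the restriction of `x` to the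
edges with both endpoints in `V \ {r}` lies in the spanning tree polytope of the induced
multigraph `G[V \ {r}]`: it is nonnegative, satisfies `x(E(S)) ≤ |S| - 1` for every
nonempty `S ⊆ V \ {r}`, and `x(E(V \ {r})) = |V \ {r}| - 1`. -/
theorem stmt1 {V E : Type*} [Fintype V] [DecidableEq V] [Fintype E]
    (ends : E → V × V) (hloop : ∀ e, (ends e).1 ≠ (ends e).2)
    (x : E → ℝ) (r : V) (hx : memKTSP ends x) :
    (∀ e ∈ edgesIn ends (Finset.univ.erase r), 0 ≤ x e) ∧
    (∀ S : Finset V, S ⊆ Finset.univ.erase r → S.Nonempty →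
      ∑ e ∈ edgesIn ends S, x e ≤ (S.card : ℝ) - 1) ∧
    (∑ e ∈ edgesIn ends (Finset.univ.erase r), x e
      = ((Finset.univ.erase r).card : ℝ) - 1) := by
  obtain ⟨hpos, hdeg, hsub⟩ := hx
  -- card V ≥ 2
  have hn2 : 2 ≤ Fintype.card V := by
    by_contra h
    push_neg at h
    have hsub1 : Subsingleton V := by
      have : Fintype.card V ≤ 1 := by omega
      exact Fintype.card_le_one_iff_subsingleton.mp this
    cases isEmpty_or_nonempty E with
    | inl hE =>
      have := hdeg r
      rw [Finset.sum_eq_zero (fun e _ => (hE.false e).elim)] at this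
      norm_num at this
    | inr hE =>
      obtain ⟨e⟩ := hE
      exact hloop e (Subsingleton.elim _ _)
  -- the degree sum over a set S equals 2 |S|
  have hdegsum : ∀ S : Finset V,
      2 * ∑ e ∈ edgesIn ends S, x e + ∑ e ∈ cut ends S, x e = 2 * S.card := by
    intro S
    rw [← degree_sum ends hloop x S]
    rw [Finset.sum_congr rfl (fun v _ => hdeg v)]
    simp [mul_comm]
  have hcardR : (Finset.univ.erase r).card = Fintype.card V - 1 :=
    Finset.card_erase_of_mem (Finset.mem_univ r)
  -- cut of erase = cut of {r}
  have hcut : cut ends (Finset.univ.erase r) = cut ends {r} := by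
    ext e
    simp only [cut, Finset.mem_filter, Finset.mem_univ, true_and, Finset.mem_erase,
      Finset.mem_singleton]
    tauto
  -- third statement
  have h3 : ∑ e ∈ edgesIn ends (Finset.univ.erase r), x e
      = ((Finset.univ.erase r).card : ℝ) - 1 := by
    have := hdegsum (Finset.univ.erase r)
    rw [hcut, hdeg r] at this
    linarith
  refine ⟨fun e _ => hpos e, fun S hS hne => ?_, h3⟩
  have hpos1 : 0 < S.card := Finset.card_pos.mpr hne
  rcases lt_trichotomy S.card 2 with h1 | h1 | h1
  · -- card 1
    obtain ⟨v, rfl⟩ := Finset.card_eq_one.mp (by omega : S.card = 1)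
    have hempty : edgesIn ends {v} = ∅ := by
      rw [Finset.eq_empty_iff_forall_notMem]
      intro e he
      simp only [edgesIn, Finset.mem_filter, Finset.mem_singleton] at he
      exact hloop e (he.2.1.trans he.2.2.symm)
    simp [hempty]
  · -- handled by the general case below; merge: card = 2
    have hlt : S.card < Fintype.card V - 1 ∨ S = Finset.univ.erase r := by
      have hle : S.card ≤ Fintype.card V - 1 := hcardR ▸ Finset.card_le_card hS
      rcases eq_or_lt_of_le hle with h | h
      · exact Or.inr (Finset.eq_of_subset_of_card_le hS (by omega))
      · exact Or.inl h
    rcases hlt with h | rfl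
    · have := hdegsum S
      have h2 := hsub S (by omega) h
      linarith
    · exact le_of_eq h3
  · have hlt : S.card < Fintype.card V - 1 ∨ S = Finset.univ.erase r := by
      have hle : S.card ≤ Fintype.card V - 1 := hcardR ▸ Finset.card_le_card hS
      rcases eq_or_lt_of_le hle with h | h
      · exact Or.inr (Finset.eq_of_subset_of_card_le hS (by omega))
      · exact Or.inl h
    rcases hlt with h | rfl
    · have := hdegsum S
      have h2 := hsub S (by omega) h
      linarith
    · exact le_of_eq h3
end

section
/- Let G=(V,E) be a multigraph with |V| even, and let x ∈ K_TSP(G). Then x/2 belongs to the perfect matching polytope of G, i.e. the vector z := x/2 satisfies z ≥ 0, z(∂v) = 1 for every v ∈ V, and z(∂S) ≥ 1 for every S ⊆ V with |S| odd. -/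
open Finset

/-- If `|V|` is even and `x ∈ K_TSP(G)`, then `x/2` lies in the
perfect matching polytope of `G`. -/
theorem stmt2 {V E : Type*} [Fintype V] [DecidableEq V] [Fintype E]
    (ends : E → V × V) (hloop : ∀ e, (ends e).1 ≠ (ends e).2)
    (hV : Even (Fintype.card V))
    (x : E → ℝ) (hx : memKTSP ends x) :
    (∀ e, 0 ≤ x e / 2) ∧
    (∀ v : V, ∑ e ∈ cut ends {v}, x e / 2 = 1) ∧
    (∀ S : Finset V, Odd S.card → 1 ≤ ∑ e ∈ cut ends S, x e / 2) := by
  obtain ⟨hnn, hdeg, hsub⟩ := hx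
  have hcompl : ∀ S : Finset V, cut ends Sᶜ = cut ends S := by
    intro S
    ext e
    simp only [cut, mem_filter, mem_compl]
    tauto
  have key : ∀ S : Finset V, Odd S.card → 2 ≤ ∑ e ∈ cut ends S, x e := by
    intro S hS
    have h1 : 1 ≤ S.card := hS.pos
    have h2 : S.card ≤ Fintype.card V := S.card_le_univ
    have hne : S.card ≠ Fintype.card V := by
      intro h; rw [h] at hS; exact (Nat.not_even_iff_odd.mpr hS) hV
    rcases eq_or_lt_of_le h1 with h1 | h1
    · obtain ⟨v, hv⟩ := Finset.card_eq_one.mp h1.symm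
      rw [hv, hdeg v]
    have hcase : S.card = Fintype.card V - 1 ∨ S.card < Fintype.card V - 1 := by omega
    rcases hcase with h3 | h3
    · -- S.card = |V| - 1
      have hc : Sᶜ.card = 1 := by
        rw [Finset.card_compl, h3]
        omega
      obtain ⟨v, hv⟩ := Finset.card_eq_one.mp hc
      rw [← hcompl S, hv, hdeg v]
    · exact hsub S h1 h3
  refine ⟨fun e => by linarith [hnn e], fun v => ?_, fun S hS => ?_⟩
  · rw [← Finset.sum_div, hdeg v]; norm_num
  · rw [← Finset.sum_div]
    linarith [key S hS]
end

section
/- Let (Ω, P) be a finite probability space, let E be a finite set, let M and T be random subsets of E (measurable maps from Ω to subsets of E), and let f, g ∈ E be distinct. Suppose: (i) P(f ∈ M) = P(g ∈ M) = 1/4; (ii) P(f ∈ M and g ∈ M) = 0; and (iii) for every m ⊆ E with P(M = m) > 0 and each h ∈ {f, g}, the conditional probability P(h ∈ T | M = m) equals 1 if h ∈ m and equals 1/3 if h ∉ m. Then P(f ∈ T and g ∈ T) ≥ 1/6 and P(f ∈ T and g ∉ T) ≥ 1/6. -/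
open Finset

open Classical in
/-- Probability of the event `A` in the finite probability space with weights `p`. -/
noncomputable def Pr {Ω : Type*} [Fintype Ω] (p : Ω → ℝ) (A : Ω → Prop) : ℝ :=
  ∑ ω : Ω, if A ω then p ω else 0

section Helpers

variable {Ω : Type*} [Fintype Ω] (p : Ω → ℝ)

open Classical

lemma Pr_nonneg (hp0 : ∀ ω, 0 ≤ p ω) (A : Ω → Prop) : 0 ≤ Pr p A := by
  apply Finset.sum_nonneg
  intro ω _
  split <;> simp [hp0 ω]

lemma Pr_congr {A B : Ω → Prop} (h : ∀ ω, A ω ↔ B ω) : Pr p A = Pr p B :=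
  Finset.sum_congr rfl fun ω _ => if_congr (h ω) rfl rfl

lemma Pr_mono (hp0 : ∀ ω, 0 ≤ p ω) {A B : Ω → Prop} (h : ∀ ω, A ω → B ω) :
    Pr p A ≤ Pr p B := by
  apply Finset.sum_le_sum
  intro ω _
  by_cases hA : A ω
  · simp [hA, h ω hA]
  · simp [hA]
    split <;> simp [hp0 ω]

lemma Pr_split (A B : Ω → Prop) :
    Pr p A = Pr p (fun ω => A ω ∧ B ω) + Pr p (fun ω => A ω ∧ ¬ B ω) := by
  unfold Pr
  rw [← Finset.sum_add_distrib]
  apply Finset.sum_congr rfl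
  intro ω _
  by_cases hA : A ω <;> by_cases hB : B ω <;> simp [hA, hB]

lemma Pr_inclexcl (A B : Ω → Prop) :
    Pr p (fun ω => A ω ∨ B ω) + Pr p (fun ω => A ω ∧ B ω) = Pr p A + Pr p B := by
  unfold Pr
  rw [← Finset.sum_add_distrib, ← Finset.sum_add_distrib]
  apply Finset.sum_congr rfl
  intro ω _
  by_cases hA : A ω <;> by_cases hB : B ω <;> simp [hA, hB]

lemma Pr_partition {E : Type*} [Fintype E] [DecidableEq E] (M : Ω → Finset E) (A : Ω → Prop) :
    Pr p A = ∑ m : Finset E, Pr p (fun ω => A ω ∧ M ω = m) := by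
  unfold Pr
  rw [Finset.sum_comm]
  apply Finset.sum_congr rfl
  intro ω _
  by_cases hA : A ω
  · simp [hA]
  · simp [hA]

/-- If `A` holds a.s. on `C`, then `P(B ∧ C) = P((A ∧ B) ∧ C)`. -/
lemma Pr_as (hp0 : ∀ ω, 0 ≤ p ω) {A B C : Ω → Prop}
    (h : Pr p (fun ω => A ω ∧ C ω) = Pr p C) :
    Pr p (fun ω => B ω ∧ C ω) = Pr p (fun ω => (A ω ∧ B ω) ∧ C ω) := by
  have h1 := Pr_split p (fun ω => B ω ∧ C ω) A
  have h2 := Pr_split p C A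
  have h3 : Pr p (fun ω => C ω ∧ A ω) = Pr p (fun ω => A ω ∧ C ω) :=
    Pr_congr p fun ω => and_comm
  have h4 : Pr p (fun ω => (B ω ∧ C ω) ∧ ¬ A ω) ≤ Pr p (fun ω => C ω ∧ ¬ A ω) :=
    Pr_mono p hp0 fun ω h => ⟨h.1.2, h.2⟩
  have h5 : 0 ≤ Pr p (fun ω => (B ω ∧ C ω) ∧ ¬ A ω) := Pr_nonneg p hp0 _
  have h6 : Pr p (fun ω => (B ω ∧ C ω) ∧ A ω) = Pr p (fun ω => (A ω ∧ B ω) ∧ C ω) :=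
    Pr_congr p fun ω => by tauto
  linarith

lemma Pr_weighted_sum {E : Type*} [Fintype E] [DecidableEq E] (M : Ω → Finset E)
    (c : ℝ) (Q : Finset E → Prop) [DecidablePred Q] :
    ∑ m : Finset E, (if Q m then c else 0) * Pr p (fun ω => M ω = m)
      = c * Pr p (fun ω => Q (M ω)) := by
  rw [Pr_partition p M (fun ω => Q (M ω)), Finset.mul_sum]
  apply Finset.sum_congr rfl
  intro m _
  by_cases hQ : Q m
  · simp only [hQ, if_true]
    congr 1
    apply Pr_congr
    intro ω
    constructor
    · intro hm; subst hm; exact ⟨hQ, rfl⟩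
    · exact fun h => h.2
  · simp only [hQ, if_false, zero_mul]
    have : Pr p (fun ω => Q (M ω) ∧ M ω = m) = Pr p (fun _ => False) :=
      Pr_congr p fun ω => ⟨fun h => hQ (h.2 ▸ h.1), False.elim⟩
    rw [this]
    simp [Pr]

end Helpers

open Classical in
/-- In a finite probability space, if `M` is a random edge set with
`P(f ∈ M) = P(g ∈ M) = 1/4`, never containing both `f` and `g`, and `T` is a random
edge set whose conditional marginals given `M = m` are `1` on edges of `m` and `1/3`
off `m` (for the edges `f, g`), then `P(f ∈ T ∧ g ∈ T) ≥ 1/6` and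
`P(f ∈ T ∧ g ∉ T) ≥ 1/6`. -/
theorem stmt7 {Ω E : Type*} [Fintype Ω] [Fintype E] [DecidableEq E]
    (p : Ω → ℝ) (hp0 : ∀ ω, 0 ≤ p ω) (hp1 : ∑ ω : Ω, p ω = 1)
    (M T : Ω → Finset E) (f g : E) (hfg : f ≠ g)
    (hMf : Pr p (fun ω => f ∈ M ω) = 1 / 4)
    (hMg : Pr p (fun ω => g ∈ M ω) = 1 / 4)
    (hMfg : Pr p (fun ω => f ∈ M ω ∧ g ∈ M ω) = 0)
    (hT : ∀ m : Finset E, 0 < Pr p (fun ω => M ω = m) →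
      ∀ h ∈ ({f, g} : Finset E),
        Pr p (fun ω => h ∈ T ω ∧ M ω = m) =
          (if h ∈ m then (1 : ℝ) else 1 / 3) * Pr p (fun ω => M ω = m)) :
    1 / 6 ≤ Pr p (fun ω => f ∈ T ω ∧ g ∈ T ω) ∧
    1 / 6 ≤ Pr p (fun ω => f ∈ T ω ∧ g ∉ T ω) := by
  classical
  have hfmem : f ∈ ({f, g} : Finset E) := by simp
  have hgmem : g ∈ ({f, g} : Finset E) := by simp
  -- no m with positive probability contains both f and g
  have hboth : ∀ m : Finset E, 0 < Pr p (fun ω => M ω = m) → f ∈ m → ¬ g ∈ m := by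
    intro m hpos hf hg
    have hle : Pr p (fun ω => M ω = m) ≤ Pr p (fun ω => f ∈ M ω ∧ g ∈ M ω) :=
      Pr_mono p hp0 fun ω h => ⟨h ▸ hf, h ▸ hg⟩
    linarith
  -- per-m bounds
  have key1 : ∀ m : Finset E,
      (if f ∈ m ∨ g ∈ m then (1 : ℝ)/3 else 0) * Pr p (fun ω => M ω = m)
        ≤ Pr p (fun ω => (f ∈ T ω ∧ g ∈ T ω) ∧ M ω = m) := by
    intro m
    by_cases hpos : 0 < Pr p (fun ω => M ω = m)
    · by_cases hf : f ∈ m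
      · have hg : g ∉ m := hboth m hpos hf
        have hTf := hT m hpos f hfmem
        have hTg := hT m hpos g hgmem
        rw [if_pos hf, one_mul] at hTf
        rw [if_neg hg] at hTg
        have := Pr_as p hp0 (A := fun ω => f ∈ T ω) (B := fun ω => g ∈ T ω)
          (C := fun ω => M ω = m) hTf
        rw [if_pos (Or.inl hf)]
        linarith
      · by_cases hg : g ∈ m
        · have hTf := hT m hpos f hfmem
          have hTg := hT m hpos g hgmem
          rw [if_pos hg, one_mul] at hTg
          rw [if_neg hf] at hTf
          have := Pr_as p hp0 (A := fun ω => g ∈ T ω) (B := fun ω => f ∈ T ω)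
            (C := fun ω => M ω = m) hTg
          have hcg : Pr p (fun ω => (g ∈ T ω ∧ f ∈ T ω) ∧ M ω = m)
              = Pr p (fun ω => (f ∈ T ω ∧ g ∈ T ω) ∧ M ω = m) :=
            Pr_congr p fun ω => by tauto
          rw [if_pos (Or.inr hg)]
          linarith
        · rw [if_neg (by tauto), zero_mul]
          exact Pr_nonneg p hp0 _
    · have h0 : Pr p (fun ω => M ω = m) = 0 :=
        le_antisymm (by linarith [not_lt.mp hpos]) (Pr_nonneg p hp0 _)
      rw [h0, mul_zero]
      exact Pr_nonneg p hp0 _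
  have key2 : ∀ m : Finset E,
      (if f ∈ m then (2 : ℝ)/3 else 0) * Pr p (fun ω => M ω = m)
        ≤ Pr p (fun ω => (f ∈ T ω ∧ g ∉ T ω) ∧ M ω = m) := by
    intro m
    by_cases hpos : 0 < Pr p (fun ω => M ω = m)
    · by_cases hf : f ∈ m
      · have hg : g ∉ m := hboth m hpos hf
        have hTf := hT m hpos f hfmem
        have hTg := hT m hpos g hgmem
        rw [if_pos hf, one_mul] at hTf
        rw [if_neg hg] at hTg
        -- P(g ∉ T ∧ M = m) = 2/3 * P(M = m)
        have hsplit := Pr_split p (fun ω => M ω = m) (fun ω => g ∈ T ω)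
        have hc1 : Pr p (fun ω => M ω = m ∧ g ∈ T ω)
            = Pr p (fun ω => g ∈ T ω ∧ M ω = m) := Pr_congr p fun ω => and_comm
        have hc2 : Pr p (fun ω => M ω = m ∧ ¬ g ∈ T ω)
            = Pr p (fun ω => (¬ g ∈ T ω) ∧ M ω = m) := Pr_congr p fun ω => and_comm
        have hTg' : Pr p (fun ω => (¬ g ∈ T ω) ∧ M ω = m)
            = 2/3 * Pr p (fun ω => M ω = m) := by linarith
        have := Pr_as p hp0 (A := fun ω => f ∈ T ω) (B := fun ω => ¬ g ∈ T ω)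
          (C := fun ω => M ω = m) hTf
        rw [if_pos hf]
        linarith
      · rw [if_neg hf, zero_mul]
        exact Pr_nonneg p hp0 _
    · have h0 : Pr p (fun ω => M ω = m) = 0 :=
        le_antisymm (by linarith [not_lt.mp hpos]) (Pr_nonneg p hp0 _)
      rw [h0, mul_zero]
      exact Pr_nonneg p hp0 _
  -- P(f ∈ M ∨ g ∈ M) = 1/2
  have hor : Pr p (fun ω => f ∈ M ω ∨ g ∈ M ω) = 1/2 := by
    have := Pr_inclexcl p (fun ω => f ∈ M ω) (fun ω => g ∈ M ω)
    linarith
  constructor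
  · rw [Pr_partition p M (fun ω => f ∈ T ω ∧ g ∈ T ω)]
    calc (1:ℝ)/6 = (1/3) * Pr p (fun ω => f ∈ M ω ∨ g ∈ M ω) := by rw [hor]; ring
    _ = ∑ m : Finset E, (if f ∈ m ∨ g ∈ m then (1 : ℝ)/3 else 0)
          * Pr p (fun ω => M ω = m) :=
        (Pr_weighted_sum p M (1/3) (fun m => f ∈ m ∨ g ∈ m)).symm
    _ ≤ _ := Finset.sum_le_sum fun m _ => key1 m
  · rw [Pr_partition p M (fun ω => f ∈ T ω ∧ g ∉ T ω)]
    calc (1:ℝ)/6 = (2/3) * Pr p (fun ω => f ∈ M ω) := by rw [hMf]; ring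
    _ = ∑ m : Finset E, (if f ∈ m then (2 : ℝ)/3 else 0)
          * Pr p (fun ω => M ω = m) :=
        (Pr_weighted_sum p M (2/3) (fun m => f ∈ m)).symm
    _ ≤ _ := Finset.sum_le_sum fun m _ => key2 m
end

section
/- Let G=(B, F, E) be a finite bipartite graph with parts B and F and edge set E ⊆ B × F, let b_u be a positive integer for each u ∈ B, and let c ≥ 0 be a real number. Then there exists a function x: B × F → ℝ with x ≥ 0, x(u,f) = 0 whenever (u,f) ∉ E, Σ_{f : (u,f) ∈ E} x(u,f) = b_u for every u ∈ B, and Σ_{u : (u,f) ∈ E} x(u,f) ≤ c for every f ∈ F, if and only if c·|N(R)| ≥ b(R) for every R ⊆ B, where N(R) := {f ∈ F : (u,f) ∈ E for some u ∈ R} and b(R) := Σ_{u∈R} b_u. -/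
open Finset

lemma core {B F : Type*} [Fintype B] [DecidableEq B] [Fintype F] [DecidableEq F]
    (E : Finset (B × F)) (b : B → ℕ) (p m : ℕ)
    (hall : ∀ R : Finset B, m * ∑ u ∈ R, b u ≤
      p * (Finset.univ.filter fun f : F => ∃ u ∈ R, (u, f) ∈ E).card) :
    ∃ y : B × F → ℕ,
      (∀ pr, pr ∉ E → y pr = 0) ∧
      (∀ u : B, ∑ f ∈ Finset.univ, y (u, f) = m * b u) ∧
      (∀ f : F, ∑ u ∈ Finset.univ, y (u, f) ≤ p) := by
  classical
  set A : B → Finset F := fun u => Finset.univ.filter fun f => (u, f) ∈ E with hA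
  set t : (Σ u : B, Fin (m * b u)) → Finset (F × Fin p) := fun i => (A i.1) ×ˢ Finset.univ with ht
  obtain ⟨g, hginj, hgmem⟩ :
      ∃ g : (Σ u : B, Fin (m * b u)) → F × Fin p, Function.Injective g ∧ ∀ i, g i ∈ t i := by
    rw [← Finset.all_card_le_biUnion_card_iff_exists_injective]
    intro S
    set R := S.image Sigma.fst with hR
    have hsub : S ⊆ R.sigma (fun u => (Finset.univ : Finset (Fin (m * b u)))) := by
      intro i hi
      simp only [Finset.mem_sigma, Finset.mem_univ, and_true, hR]
      exact Finset.mem_image_of_mem Sigma.fst hi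
    have h1 : S.card ≤ m * ∑ u ∈ R, b u := by
      calc S.card ≤ (R.sigma fun u => (Finset.univ : Finset (Fin (m * b u)))).card :=
            Finset.card_le_card hsub
        _ = ∑ u ∈ R, m * b u := by simp [Finset.card_sigma]
        _ = m * ∑ u ∈ R, b u := by rw [Finset.mul_sum]
    have h2 : S.biUnion t = (R.biUnion A) ×ˢ (Finset.univ : Finset (Fin p)) := by
      ext ⟨f, j⟩
      simp only [Finset.mem_biUnion, Finset.mem_product, Finset.mem_univ, and_true, ht, hR,
        Finset.mem_image]
      constructor
      · rintro ⟨i, hiS, hf⟩; exact ⟨i.1, ⟨i, hiS, rfl⟩, hf⟩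
      · rintro ⟨u, ⟨i, hiS, rfl⟩, hf⟩; exact ⟨i, hiS, hf⟩
    have h3 : R.biUnion A = Finset.univ.filter fun f : F => ∃ u ∈ R, (u, f) ∈ E := by
      ext f; simp [hA]
    rw [h2, Finset.card_product, h3]
    calc S.card ≤ m * ∑ u ∈ R, b u := h1
      _ ≤ p * (Finset.univ.filter fun f : F => ∃ u ∈ R, (u, f) ∈ E).card := hall R
      _ = _ := by simp [mul_comm, Finset.card_univ]
  refine ⟨fun pr => (Finset.univ.filter fun i : (Σ u : B, Fin (m * b u)) => i.1 = pr.1 ∧ (g i).1 = pr.2).card,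
    ?_, ?_, ?_⟩
  · rintro ⟨u, f⟩ hpr
    rw [Finset.card_eq_zero, Finset.filter_eq_empty_iff]
    rintro i -
    rintro ⟨rfl, rfl⟩
    have := hgmem i
    simp only [ht, Finset.mem_product, hA, Finset.mem_filter] at this
    exact hpr this.1.2
  · intro u
    have key : (Finset.univ.filter fun i : (Σ u : B, Fin (m * b u)) => i.1 = u).card = m * b u := by
      have : (Finset.univ.filter fun i : (Σ u : B, Fin (m * b u)) => i.1 = u)
          = ({u} : Finset B).sigma (fun v => (Finset.univ : Finset (Fin (m * b v)))) := by
        ext ⟨v, i⟩; simp [Finset.mem_sigma, eq_comm]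
      rw [this, Finset.card_sigma]; simp
    rw [← key]
    rw [Finset.card_eq_sum_card_fiberwise (f := fun i => (g i).1)
      (t := (Finset.univ : Finset F)) (fun i _ => Finset.mem_univ _)]
    apply Finset.sum_congr rfl
    intro f _
    rw [Finset.filter_filter]
  · intro f
    have key : (∑ u ∈ Finset.univ,
        (Finset.univ.filter fun i : (Σ u : B, Fin (m * b u)) => i.1 = u ∧ (g i).1 = f).card)
        = (Finset.univ.filter fun i : (Σ u : B, Fin (m * b u)) => (g i).1 = f).card := by
      rw [Finset.card_eq_sum_card_fiberwise (f := fun i => i.1)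
        (t := (Finset.univ : Finset B)) (fun i _ => Finset.mem_univ _)]
      apply Finset.sum_congr rfl
      intro u _
      rw [Finset.filter_filter]
      congr 1
      ext i; simp [and_comm]
    rw [key]
    have : (Finset.univ.filter fun i : (Σ u : B, Fin (m * b u)) => (g i).1 = f).card
        ≤ (Finset.univ : Finset (Fin p)).card := by
      apply Finset.card_le_card_of_injOn (fun i => (g i).2) (fun i _ => Finset.mem_univ _)
      intro i hi j hj hij
      simp only [Finset.mem_coe, Finset.mem_filter] at hi hj
      apply hginj
      exact Prod.ext (hi.2.trans hj.2.symm) hij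
    simpa using this
open Finset

/-- **Lemma 6.2.** In a finite bipartite graph with parts `B`, `F` and
edge set `E ⊆ B × F`, given demands `b_u > 0` on `B` and a capacity `c ≥ 0`, there is a
nonnegative function `x` supported on the edges with `Σ_f x(u,f) = b_u` for all `u ∈ B`
and `Σ_u x(u,f) ≤ c` for all `f ∈ F`, if and only if `c·|N(R)| ≥ b(R)` for all
`R ⊆ B`. -/
theorem stmt9 {B F : Type*} [Fintype B] [DecidableEq B] [Fintype F] [DecidableEq F]
    (E : Finset (B × F)) (b : B → ℕ) (hb : ∀ u, 0 < b u) (c : ℝ) (hc : 0 ≤ c) :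
    (∃ x : B × F → ℝ,
      (∀ p, 0 ≤ x p) ∧
      (∀ p, p ∉ E → x p = 0) ∧
      (∀ u : B, ∑ f ∈ Finset.univ.filter (fun f : F => (u, f) ∈ E), x (u, f)
        = (b u : ℝ)) ∧
      (∀ f : F, ∑ u ∈ Finset.univ.filter (fun u : B => (u, f) ∈ E), x (u, f) ≤ c)) ↔
    (∀ R : Finset B,
      (∑ u ∈ R, (b u : ℝ)) ≤
        c * ((Finset.univ.filter fun f : F => ∃ u ∈ R, (u, f) ∈ E).card : ℝ)) := by
  classical
  constructor
  · rintro ⟨x, hx0, hxE, hrow, hcol⟩ R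
    set NR := Finset.univ.filter fun f : F => ∃ u ∈ R, (u, f) ∈ E with hNR
    have step1 : ∀ u ∈ R, (b u : ℝ) = ∑ f ∈ NR, x (u, f) := by
      intro u hu
      rw [← hrow u]
      apply Finset.sum_subset
      · intro f hf
        simp only [hNR, Finset.mem_filter, Finset.mem_univ, true_and] at hf ⊢
        exact ⟨u, hu, hf⟩
      · intro f _ hf
        simp only [hNR, Finset.mem_filter, Finset.mem_univ, true_and] at hf
        exact hxE (u, f) hf
    calc ∑ u ∈ R, (b u : ℝ) = ∑ u ∈ R, ∑ f ∈ NR, x (u, f) := Finset.sum_congr rfl step1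
      _ = ∑ f ∈ NR, ∑ u ∈ R, x (u, f) := Finset.sum_comm
      _ ≤ ∑ f ∈ NR, ∑ u ∈ Finset.univ.filter (fun u : B => (u, f) ∈ E), x (u, f) := by
          apply Finset.sum_le_sum
          intro f _
          rw [show (∑ u ∈ R, x (u, f))
              = ∑ u ∈ R.filter (fun u => (u, f) ∈ E), x (u, f) from
            (Finset.sum_subset (Finset.filter_subset _ _)
              (fun u _ hu => by
                simp only [Finset.mem_filter] at hu
                by_cases h' : u ∈ R
                · exact hxE (u, f) fun hE => hu ⟨h', hE⟩
                · exact absurd ‹u ∈ R› h' )).symm]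
          apply Finset.sum_le_sum_of_subset_of_nonneg
          · intro u hu
            simp only [Finset.mem_filter, Finset.mem_univ, true_and] at hu ⊢
            exact hu.2
          · exact fun u _ _ => hx0 (u, f)
      _ ≤ ∑ _f ∈ NR, c := Finset.sum_le_sum fun f _ => hcol f
      _ = c * NR.card := by rw [Finset.sum_const, nsmul_eq_mul, mul_comm]
  · intro h
    rcases isEmpty_or_nonempty B with hB | hB
    · refine ⟨0, fun p => le_refl 0, fun p _ => rfl, fun u => (IsEmpty.false u).elim,
        fun f => by simp [hc]⟩
    · set n : Finset B → ℕ := fun R => (Finset.univ.filter fun f : F => ∃ u ∈ R, (u, f) ∈ E).card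
        with hn
      set s : Finset B → ℕ := fun R => ∑ u ∈ R, b u with hs
      have hcast : ∀ R : Finset B, ((s R : ℝ)) ≤ c * n R := by
        intro R
        have := h R
        push_cast [hs, hn]
        exact_mod_cast this
      have npos : ∀ R : Finset B, R.Nonempty → 0 < n R := by
        intro R hR
        rcases Nat.eq_zero_or_pos (n R) with h' | h'
        · exfalso
          have h1 : 0 < s R := Finset.sum_pos (fun u _ => hb u) hR
          have h2 := hcast R
          rw [h'] at h2
          simp only [Nat.cast_zero, mul_zero, Nat.cast_nonpos] at h2
          omega
        · exact h'
      set 𝒮 : Finset (Finset B) := Finset.univ.filter Finset.Nonempty with h𝒮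
      have h𝒮ne : 𝒮.Nonempty := by
        obtain ⟨u₀⟩ := hB
        exact ⟨{u₀}, by simp [h𝒮, Finset.singleton_nonempty]⟩
      obtain ⟨R₀, hR₀mem, hmax⟩ :=
        Finset.exists_max_image 𝒮 (fun R => (s R : ℝ) / (n R : ℝ)) h𝒮ne
      have hR₀ne : R₀.Nonempty := by
        simp only [h𝒮, Finset.mem_filter] at hR₀mem
        exact hR₀mem.2
      set p := s R₀ with hp
      set m := n R₀ with hm
      have hm0 : 0 < m := npos R₀ hR₀ne
      have hm0R : (0:ℝ) < m := by exact_mod_cast hm0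
      have hpc : (p : ℝ) ≤ c * m := hcast R₀
      have hall : ∀ R : Finset B, m * ∑ u ∈ R, b u ≤
          p * (Finset.univ.filter fun f : F => ∃ u ∈ R, (u, f) ∈ E).card := by
        intro R
        rcases R.eq_empty_or_nonempty with rfl | hRne
        · simp
        · have hnR : 0 < n R := npos R hRne
          have hnRR : (0:ℝ) < n R := by exact_mod_cast hnR
          have hRmem : R ∈ 𝒮 := by simp [h𝒮, hRne]
          have := hmax R hRmem
          rw [div_le_div_iff₀ hnRR hm0R] at this
          have : (m : ℝ) * s R ≤ p * n R := by nlinarith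
          exact_mod_cast this
      obtain ⟨y, hy0, hyrow, hycol⟩ := core E b p m hall
      refine ⟨fun pr => (y pr : ℝ) / m, ?_, ?_, ?_, ?_⟩
      · intro pr; positivity
      · intro pr hpr; simp only [hy0 pr hpr, Nat.cast_zero, zero_div]
      · intro u
        show (∑ f ∈ Finset.univ.filter (fun f : F => (u, f) ∈ E), ((y (u, f) : ℝ) / m))
          = (b u : ℝ)
        have hfull : ∑ f ∈ Finset.univ.filter (fun f : F => (u, f) ∈ E), y (u, f)
            = ∑ f ∈ Finset.univ, y (u, f) :=
          Finset.sum_subset (Finset.subset_univ _)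
            (fun f _ hf => hy0 (u, f) (by simpa using hf))
        rw [← Finset.sum_div]
        rw [show ∑ f ∈ Finset.univ.filter (fun f : F => (u, f) ∈ E), ((y (u, f) : ℝ))
            = ((∑ f ∈ Finset.univ.filter (fun f : F => (u, f) ∈ E), y (u, f) : ℕ) : ℝ)
          from by push_cast; rfl]
        rw [hfull, hyrow u]
        push_cast
        field_simp
      · intro f
        show (∑ u ∈ Finset.univ.filter (fun u : B => (u, f) ∈ E), ((y (u, f) : ℝ) / m)) ≤ c
        rw [← Finset.sum_div]
        rw [div_le_iff₀ hm0R]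
        have h1 : ∑ u ∈ Finset.univ.filter (fun u : B => (u, f) ∈ E), ((y (u, f) : ℝ))
            = ((∑ u ∈ Finset.univ.filter (fun u : B => (u, f) ∈ E), y (u, f) : ℕ) : ℝ) := by
          push_cast; rfl
        rw [h1]
        have h2 : (∑ u ∈ Finset.univ.filter (fun u : B => (u, f) ∈ E), y (u, f))
            ≤ ∑ u ∈ Finset.univ, y (u, f) :=
          Finset.sum_le_sum_of_subset (Finset.subset_univ _)
        have h3 := hycol f
        calc ((∑ u ∈ Finset.univ.filter (fun u : B => (u, f) ∈ E), y (u, f) : ℕ) : ℝ)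
            ≤ (p : ℝ) := by exact_mod_cast le_trans h2 h3
          _ ≤ c * m := hpc
end

section
/- Let H=(V,E) be a finite simple 4-regular graph with |V| ≥ 5 such that |∂S| ≥ 4 for every nonempty S ⊊ V and |∂S| ≥ 6 for every proper subset S (1 < |S| < |V|−1), and assume H is not isomorphic to the complete graph K_5. Fix r ∈ V and form the bipartization H'=(B,F): B := ∂r, F := E ∖ ∂r, and e ∈ B is adjacent to f ∈ F if and only if the endpoint of e other than r is an endpoint of f. Then for every R ⊆ B, |N(R)| ≥ 2|R|, where N(R) is the set of vertices of F adjacent in H' to some vertex of R; equivalently, condition (Hall cond) holds with b_u = 1 for all u ∈ B and c = 1/2. -/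
/-!
Let `U` be the set of far endpoints of the edges in `R`, so `|U| = |R| = k`. Every `u ∈ U` has
three edges avoiding `r`, and an edge is counted twice exactly when it lies inside `U`; hence
`|N(R)| = 3k - e(U)`, and it suffices that `e(U) ≤ k`. For `k ≤ 3` this is `e(U) ≤ C(k, 2)`.
For `k = 4`, `U` is the whole neighbourhood of `r`, and degree counting on `S = {r} ∪ U` gives
`|∂S| = 12 - 2 e(U)`; since `H ≠ K₅`, `S ≠ V`, so `|∂S| ≥ 4` and `e(U) ≤ 4`.
-/

/-- The cut `∂S` of a simple graph: the set of edges with exactly one endpoint in `S`. -/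
def scut {V : Type*} (H : SimpleGraph V) (S : Set V) : Set (Sym2 V) :=
  {e | e ∈ H.edgeSet ∧ ∃ u v : V, e = s(u, v) ∧ u ∈ S ∧ v ∉ S}

open Finset

namespace SimpleGraph

variable {V : Type*} [Fintype V] (G : SimpleGraph V) [DecidableRel G.Adj]

theorem eq_top_of_isRegularOfDegree_of_card_eq {d : ℕ} (hreg : G.IsRegularOfDegree d)
    (hcard : Fintype.card V = d + 1) : G = ⊤ :=
  G.eq_top_iff_forall_isUniversal.mpr fun v =>
    (G.degree_eq_card_sub_one v).mp (by rw [hreg v, hcard, Nat.add_sub_cancel])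

theorem ne_top_of_isRegularOfDegree_of_not_iso [Nonempty V] {d : ℕ}
    (hreg : G.IsRegularOfDegree d) (hK : ¬ Nonempty (G ≃g (⊤ : SimpleGraph (Fin (d + 1))))) :
    G ≠ ⊤ := by
  rintro rfl
  obtain ⟨v⟩ := ‹Nonempty V›
  have hcard : Fintype.card V = d + 1 := by
    have := ((⊤ : SimpleGraph V).degree_eq_card_sub_one v).mpr IsUniversal.top
    have := hreg v
    have := Fintype.card_pos (α := V)
    omega
  exact hK ⟨Iso.completeGraph (Fintype.equivFinOfCardEq hcard)⟩

section Counting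

variable [DecidableEq V]

def edgesInside (S : Finset V) : Finset (Sym2 V) := {e ∈ G.edgeFinset | ∀ v ∈ e, v ∈ S}

def edgesMeeting (S : Finset V) : Finset (Sym2 V) := {e ∈ G.edgeFinset | ∃ v ∈ e, v ∈ S}

variable {G} in
theorem card_filter_mem_of_mem_edgeFinset {e : Sym2 V} (he : e ∈ G.edgeFinset) (S : Finset V) :
    #{v ∈ S | v ∈ e} =
      (if ∃ v ∈ e, v ∈ S then 1 else 0) + (if ∀ v ∈ e, v ∈ S then 1 else 0) := by
  induction e with
  | _ a b =>
    have hab : a ≠ b := G.ne_of_adj (mem_edgeFinset.mp he)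
    have : ({v ∈ S | v ∈ s(a, b)} : Finset V) = {a, b} ∩ S := by
      ext v; simp [and_comm]
    rw [this]
    by_cases ha : a ∈ S <;> by_cases hb : b ∈ S <;>
      simp [ha, hb, hab, insert_inter_of_mem, insert_inter_of_notMem]

theorem sum_degree_eq_card_edgesMeeting_add_card_edgesInside (S : Finset V) :
    ∑ v ∈ S, G.degree v = #(G.edgesMeeting S) + #(G.edgesInside S) := by
  calc ∑ v ∈ S, G.degree v = ∑ v ∈ S, #{e ∈ G.edgeFinset | v ∈ e} := by
        refine sum_congr rfl fun v _ => ?_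
        rw [← card_incidenceFinset_eq_degree]
        congr 1; ext e; simp [incidenceSet, and_comm]
    _ = ∑ e ∈ G.edgeFinset, #{v ∈ S | v ∈ e} :=
        sum_card_bipartiteAbove_eq_sum_card_bipartiteBelow _
    _ = #(G.edgesMeeting S) + #(G.edgesInside S) := by
        rw [sum_congr rfl fun e he => card_filter_mem_of_mem_edgeFinset he S, sum_add_distrib,
          sum_boole, sum_boole, edgesMeeting, edgesInside]
        simp

theorem card_edgesMeeting_eq_card_edgesInside_add_ncard_scut (S : Finset V) :
    #(G.edgesMeeting S) = #(G.edgesInside S) + (scut G S).ncard := by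
  have hsub : G.edgesInside S ⊆ G.edgesMeeting S := by
    intro e he
    simp only [edgesInside, edgesMeeting, mem_filter] at he ⊢
    exact ⟨he.1, e.out.1, Sym2.out_fst_mem e, he.2 _ (Sym2.out_fst_mem e)⟩
  have hcut : scut G S = ↑(G.edgesMeeting S \ G.edgesInside S) := by
    ext e
    simp only [coe_sdiff, coe_filter, edgesMeeting, edgesInside, mem_edgeFinset, Set.mem_sdiff,
      Set.mem_ofPred_eq, not_and, not_forall, exists_prop]
    constructor
    · rintro ⟨he, u, v, rfl, hu, hv⟩
      exact ⟨⟨he, u, Sym2.mem_mk_left u v, hu⟩, fun _ => ⟨v, Sym2.mem_mk_right u v, hv⟩⟩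
    · rintro ⟨⟨he, u, hue, hu⟩, hout⟩
      obtain ⟨v, hve, hv⟩ := hout he
      have huv : u ≠ v := fun h => hv (h ▸ hu)
      exact ⟨he, u, v, (Sym2.mem_and_mem_iff huv).mp ⟨hue, hve⟩, hu, hv⟩
  rw [hcut, Set.ncard_coe_finset, card_sdiff_of_subset hsub]
  have := card_le_card hsub
  omega

theorem card_edgesInside_le_choose_two (S : Finset V) :
    #(G.edgesInside S) ≤ (#S).choose 2 := by
  rw [← Sym2.card_image_offDiag]
  refine card_le_card fun e he => ?_
  induction e with
  | _ a b =>
    simp only [edgesInside, mem_filter, mem_edgeFinset, mem_edgeSet, Sym2.mem_iff,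
      forall_eq_or_imp, forall_eq] at he
    exact mem_image.mpr ⟨(a, b), mem_offDiag.mpr ⟨he.2.1, he.2.2, he.1.ne⟩, rfl⟩

theorem card_filter_notMem_edgesMeeting_add_card {r : V} {U : Finset V}
    (hU : U ⊆ G.neighborFinset r) :
    #{f ∈ G.edgesMeeting U | r ∉ f} + #U = #(G.edgesMeeting U) := by
  have hr : {f ∈ G.edgesMeeting U | r ∈ f} = U.map (Sym2.mkEmbedding r) := by
    ext f
    simp only [edgesMeeting, mem_filter, mem_map, mem_edgeFinset, Sym2.mkEmbedding_apply]
    constructor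
    · rintro ⟨⟨hf, u, huf, hu⟩, hrf⟩
      have hru : r ≠ u := (G.mem_neighborFinset r u).mp (hU hu) |>.ne
      exact ⟨u, hu, ((Sym2.mem_and_mem_iff hru).mp ⟨hrf, huf⟩).symm⟩
    · rintro ⟨u, hu, rfl⟩
      exact ⟨⟨(G.mem_neighborFinset r u).mp (hU hu), u, Sym2.mem_mk_right r u, hu⟩,
        Sym2.mem_mk_left r u⟩
  rw [← card_map (Sym2.mkEmbedding r) (s := U), ← hr, add_comm]
  exact card_filter_add_card_filter_not _

theorem two_mul_card_edgesInside_neighborFinset_add_le {d k : ℕ}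
    (hreg : G.IsRegularOfDegree d) (htop : G ≠ ⊤)
    (hcut : ∀ S : Set V, S.Nonempty → S ≠ Set.univ → k ≤ (scut G S).ncard) (r : V) :
    2 * #(G.edgesInside (G.neighborFinset r)) + k ≤ d * (d - 1) := by
  set S := insert r (G.neighborFinset r)
  have hS : #S = d + 1 := by
    rw [card_insert_of_notMem (G.notMem_neighborFinset_self r), card_neighborFinset_eq_degree,
      hreg r]
  have hsum : ∑ v ∈ S, G.degree v = (d + 1) * d := by
    rw [sum_const_nat fun v _ => hreg v, hS]
  have hinside : #(G.edgesInside (G.neighborFinset r)) + d ≤ #(G.edgesInside S) := by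
    have hdisj : Disjoint (G.edgesInside (G.neighborFinset r)) (G.incidenceFinset r) := by
      refine Finset.disjoint_left.mpr fun e he her => ?_
      exact G.notMem_neighborFinset_self r
        ((mem_filter.mp he).2 r ((G.mem_incidenceFinset r e).mp her).2)
    have hsub : G.edgesInside (G.neighborFinset r) ∪ G.incidenceFinset r ⊆ G.edgesInside S := by
      refine union_subset (fun e he => ?_) fun e he => ?_
      · simp only [edgesInside, mem_filter] at he ⊢
        exact ⟨he.1, fun v hv => mem_insert_of_mem (he.2 v hv)⟩
      · rw [mem_incidenceFinset] at he
        obtain ⟨u, rfl⟩ := Sym2.mem_iff_exists.mp he.2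
        have hru : G.Adj r u := G.mk'_mem_incidenceSet_left_iff.mp he
        simp [edgesInside, S, hru]
    rw [← hreg r, ← card_incidenceFinset_eq_degree, ← card_union_of_disjoint hdisj]
    exact card_le_card hsub
  have hSV : (S : Set V) ≠ Set.univ := by
    intro h
    refine htop (G.eq_top_of_isRegularOfDegree_of_card_eq hreg ?_)
    rw [← hS, ← card_univ, ← coe_eq_univ.mp h]
  have hk := hcut S ⟨r, mem_insert_self r _⟩ hSV
  have hdeg := G.sum_degree_eq_card_edgesMeeting_add_card_edgesInside S
  rw [G.card_edgesMeeting_eq_card_edgesInside_add_ncard_scut S, hsum] at hdeg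
  have : (d + 1) * d = d * (d - 1) + 2 * d := by
    cases d
    · rfl
    · simp only [Nat.add_sub_cancel]; ring
  omega

theorem card_edgesInside_le_card_of_subset_neighborFinset (hreg : G.IsRegularOfDegree 4)
    (htop : G ≠ ⊤) (hcut : ∀ S : Set V, S.Nonempty → S ≠ Set.univ → 4 ≤ (scut G S).ncard)
    {r : V} {U : Finset V} (hU : U ⊆ G.neighborFinset r) :
    #(G.edgesInside U) ≤ #U := by
  have hdeg : #(G.neighborFinset r) = 4 := by rw [card_neighborFinset_eq_degree, hreg r]
  have hU4 : #U ≤ 4 := hdeg ▸ card_le_card hU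
  by_cases h4 : #U = 4
  · obtain rfl : U = G.neighborFinset r := eq_of_subset_of_card_le hU (by omega)
    have := G.two_mul_card_edgesInside_neighborFinset_add_le hreg htop hcut r
    omega
  · have hchoose : (#U).choose 2 ≤ #U := by
      have : #U ≤ 3 := by omega
      interval_cases #U <;> decide
    exact (G.card_edgesInside_le_choose_two U).trans hchoose

end Counting

section Bipartization

variable {r : V} {R : Set (Sym2 V)} [DecidablePred (· ∈ R)]

theorem ncard_eq_card_filter_neighborFinset (hR : R ⊆ {e ∈ G.edgeSet | r ∈ e}) :
    R.ncard = #{u ∈ G.neighborFinset r | s(r, u) ∈ R} := by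
  have : R = ↑({u ∈ G.neighborFinset r | s(r, u) ∈ R}.map (Sym2.mkEmbedding r)) := by
    ext e
    simp only [coe_map, Set.mem_image, coe_filter, mem_neighborFinset, Sym2.mkEmbedding_apply]
    constructor
    · intro he
      obtain ⟨heG, hre⟩ := hR he
      obtain ⟨u, rfl⟩ := Sym2.mem_iff_exists.mp hre
      exact ⟨u, ⟨heG, he⟩, rfl⟩
    · rintro ⟨u, ⟨-, hu⟩, rfl⟩
      exact hu
  conv_lhs => rw [this]
  rw [Set.ncard_coe_finset, card_map]

theorem ncard_bipartization_neighbors [DecidableEq V] (hR : R ⊆ {e ∈ G.edgeSet | r ∈ e}) :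
    {f ∈ G.edgeSet | r ∉ f ∧ ∃ e ∈ R, ∃ u : V, u ∈ e ∧ u ≠ r ∧ u ∈ f}.ncard =
      #{f ∈ G.edgesMeeting {u ∈ G.neighborFinset r | s(r, u) ∈ R} | r ∉ f} := by
  rw [← Set.ncard_coe_finset]
  congr 1
  ext f
  simp only [edgesMeeting, coe_filter, mem_filter, mem_edgeFinset, mem_neighborFinset,
    Set.mem_ofPred_eq]
  constructor
  · rintro ⟨hf, hrf, e, he, u, hue, hur, huf⟩
    obtain ⟨heG, hre⟩ := hR he
    obtain rfl : e = s(r, u) := (Sym2.mem_and_mem_iff hur.symm).mp ⟨hre, hue⟩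
    exact ⟨⟨hf, u, huf, heG, he⟩, hrf⟩
  · rintro ⟨⟨hf, u, huf, hru, hu⟩, hrf⟩
    exact ⟨hf, hrf, s(r, u), hu, u, Sym2.mem_mk_right r u, hru.ne', huf⟩

end Bipartization

end SimpleGraph

theorem stmt10_general {V : Type*} [Fintype V] [DecidableEq V]
    (H : SimpleGraph V) [DecidableRel H.Adj]
    (hreg : ∀ v : V, H.degree v = 4)
    (h4ec : ∀ S : Set V, S.Nonempty → S ≠ Set.univ → 4 ≤ (scut H S).ncard)
    (hK5 : ¬ Nonempty (H ≃g (⊤ : SimpleGraph (Fin 5))))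
    (r : V) :
    ∀ R ⊆ {e ∈ H.edgeSet | r ∈ e},
      2 * R.ncard ≤
        {f ∈ H.edgeSet | r ∉ f ∧ ∃ e ∈ R, ∃ u : V, u ∈ e ∧ u ≠ r ∧ u ∈ f}.ncard := by
  classical
  intro R hR
  have : Nonempty V := ⟨r⟩
  have hU : {u ∈ H.neighborFinset r | s(r, u) ∈ R} ⊆ H.neighborFinset r := filter_subset _ _
  have hmeet := H.card_filter_notMem_edgesMeeting_add_card hU
  have hdeg := H.sum_degree_eq_card_edgesMeeting_add_card_edgesInside
    {u ∈ H.neighborFinset r | s(r, u) ∈ R}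
  rw [sum_const_nat fun v _ => hreg v] at hdeg
  have hinside := H.card_edgesInside_le_card_of_subset_neighborFinset hreg
    (H.ne_top_of_isRegularOfDegree_of_not_iso hreg hK5) h4ec hU
  rw [H.ncard_eq_card_filter_neighborFinset hR, H.ncard_bipartization_neighbors hR]
  omega

/-- **Lemma 6.3, non-`K₅` case.** Let `H` be a finite simple 4-regular
graph on at least 5 vertices with `|∂S| ≥ 4` for every nonempty proper vertex subset and
`|∂S| ≥ 6` for every proper cut, not isomorphic to `K₅`. Fix `r` and form the
bipartization: `B` is the set of edges incident to `r`, `F` the set of edges not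
incident to `r`, and `e ∈ B` is adjacent to `f ∈ F` iff the endpoint of `e` other than
`r` is an endpoint of `f`. Then `|N(R)| ≥ 2|R|` for every `R ⊆ B`. -/
theorem stmt10 {V : Type*} [Fintype V] [DecidableEq V]
    (H : SimpleGraph V) [DecidableRel H.Adj]
    (hV : 5 ≤ Fintype.card V)
    (hreg : ∀ v : V, H.degree v = 4)
    (h4ec : ∀ S : Set V, S.Nonempty → S ≠ Set.univ → 4 ≤ (scut H S).ncard)
    (h6 : ∀ S : Set V, 1 < S.ncard → S.ncard < Fintype.card V - 1 →
      6 ≤ (scut H S).ncard)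
    (hK5 : ¬ Nonempty (H ≃g (⊤ : SimpleGraph (Fin 5))))
    (r : V) :
    ∀ R ⊆ {e ∈ H.edgeSet | r ∈ e},
      2 * R.ncard ≤
        {f ∈ H.edgeSet | r ∉ f ∧ ∃ e ∈ R, ∃ u : V, u ∈ e ∧ u ≠ r ∧ u ∈ f}.ncard :=
  stmt10_general H hreg h4ec hK5 r
end

section
/- Let B_1, B_2, B_3 be independent {0,1}-valued random variables with P(B_i = 1) = p_i and p_1 + p_2 + p_3 = 1. Then P(B_1 + B_2 + B_3 = 1) ≥ 4/9. -/
/-!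
A sum of independent `{0,1}`-valued variables equals `1` exactly when one of them is `1` and the
others are `0`; these events are disjoint, so with `a, b, c` the success probabilities,
`P(B₁ + B₂ + B₃ = 1) = a(1-b)(1-c) + (1-a)b(1-c) + (1-a)(1-b)c`. On the simplex `a + b + c = 1`
this cubic is minimised at the centre, where it equals `4/9`.
-/

open MeasureTheory ProbabilityTheory Finset
open scoped ENNReal

theorem Fintype.sum_eq_one_iff_eq_single {ι : Type*} [Fintype ι] [DecidableEq ι] (b : ι → ℕ) :
    ∑ i, b i = 1 ↔ ∃ i, b = Pi.single i 1 := by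
  have h := Finsupp.sum_eq_one_iff (Finsupp.equivFunOnFinite.symm b)
  rw [Finsupp.sum_fintype _ _ fun _ => rfl] at h
  simp only [Finsupp.coe_equivFunOnFinite_symm] at h
  rw [h]
  refine exists_congr fun i => ?_
  rw [Equiv.symm_apply_eq, Finsupp.equivFunOnFinite_single]

theorem setOf_sum_eq_one_eq_iUnion {Ω ι : Type*} [Fintype ι] [DecidableEq ι] (B : ι → Ω → ℕ) :
    {ω | ∑ i, B i ω = 1} = ⋃ i, ⋂ j, B j ⁻¹' {(Pi.single i 1 : ι → ℕ) j} := by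
  ext ω
  simp [Fintype.sum_eq_one_iff_eq_single, funext_iff]

section

variable {Ω ι : Type*} [MeasurableSpace Ω] {P : Measure Ω} [Fintype ι]

theorem ProbabilityTheory.iIndepFun.measureReal_iInter_preimage_eq_prod {β : ι → Type*}
    [∀ i, MeasurableSpace (β i)] {f : ∀ i, Ω → β i} (h : iIndepFun f P)
    {s : ∀ i, Set (β i)} (hs : ∀ i, MeasurableSet (s i)) :
    P.real (⋂ i, f i ⁻¹' s i) = ∏ i, P.real (f i ⁻¹' s i) := by
  have h_univ := h.measure_inter_preimage_eq_mul univ fun i _ => hs i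
  simp only [mem_univ, Set.iInter_true] at h_univ
  simp only [measureReal_def, h_univ, ENNReal.toReal_prod]

theorem measureReal_preimage_zero_eq_one_sub [IsProbabilityMeasure P] {f : Ω → ℕ}
    (hf : Measurable f) (h01 : ∀ ω, f ω = 0 ∨ f ω = 1) :
    P.real (f ⁻¹' {0}) = 1 - P.real (f ⁻¹' {1}) := by
  have h_compl : f ⁻¹' {0} = (f ⁻¹' {1})ᶜ := by
    ext ω
    rcases h01 ω with h | h <;> simp [h]
  rw [h_compl, probReal_compl_eq_one_sub (hf (measurableSet_singleton 1))]

theorem ProbabilityTheory.iIndepFun.measureReal_sum_eq_one [IsProbabilityMeasure P]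
    [DecidableEq ι] {B : ι → Ω → ℕ} (hmeas : ∀ i, Measurable (B i))
    (h01 : ∀ i ω, B i ω = 0 ∨ B i ω = 1) (hindep : iIndepFun B P) :
    P.real {ω | ∑ i, B i ω = 1} =
      ∑ i, ∏ j, if j = i then P.real (B j ⁻¹' {1}) else 1 - P.real (B j ⁻¹' {1}) := by
  have hdisj : Pairwise (Function.onFun Disjoint
      fun i => ⋂ j, B j ⁻¹' {(Pi.single i 1 : ι → ℕ) j}) := by
    intro i k hik
    refine Set.disjoint_left.mpr fun ω hi hk => ?_
    simp only [Set.mem_iInter, Set.mem_preimage] at hi hk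
    simpa [Pi.single_eq_of_ne hik] using (hi i).symm.trans (hk i)
  rw [setOf_sum_eq_one_eq_iUnion, measureReal_iUnion_fintype hdisj
    fun i => .iInter fun j => hmeas j (measurableSet_singleton _)]
  refine sum_congr rfl fun i _ => ?_
  rw [hindep.measureReal_iInter_preimage_eq_prod fun j => measurableSet_singleton _]
  refine prod_congr rfl fun j _ => ?_
  rcases eq_or_ne j i with rfl | hji
  · simp
  · simp [hji, measureReal_preimage_zero_eq_one_sub (hmeas j) (h01 j)]

end

theorem four_ninths_le_of_sum_eq_one {a b c : ℝ} (ha : 0 ≤ a) (hb : 0 ≤ b) (hc : 0 ≤ c)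
    (h : a + b + c = 1) :
    4 / 9 ≤ a * (1 - b) * (1 - c) + (1 - a) * b * (1 - c) + (1 - a) * (1 - b) * c := by
  nlinarith [sq_nonneg (a - b), sq_nonneg (b - c), sq_nonneg (a - c),
    mul_nonneg (mul_nonneg ha hb) hc, mul_nonneg ha hb, mul_nonneg hb hc, mul_nonneg ha hc,
    sq_nonneg (a - 1 / 3), sq_nonneg (b - 1 / 3), sq_nonneg (c - 1 / 3)]

/-- If `B₁, B₂, B₃` are independent `{0,1}`-valued random variables
with success probabilities summing to `1`, then `P(B₁ + B₂ + B₃ = 1) ≥ 4/9`. -/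
theorem stmt14 {Ω : Type*} [MeasurableSpace Ω] (P : Measure Ω) [IsProbabilityMeasure P]
    (B : Fin 3 → Ω → ℕ) (hmeas : ∀ i, Measurable (B i))
    (h01 : ∀ i ω, B i ω = 0 ∨ B i ω = 1)
    (hindep : iIndepFun B P)
    (p : Fin 3 → ℝ≥0∞) (hp : ∀ i, P {ω | B i ω = 1} = p i)
    (hsum : p 0 + p 1 + p 2 = 1) :
    4 / 9 ≤ P {ω | B 0 ω + B 1 ω + B 2 ω = 1} := by
  set a : Fin 3 → ℝ := fun i => P.real (B i ⁻¹' {1})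
  have ha : ∀ i, a i = (p i).toReal := fun i => congrArg ENNReal.toReal (hp i)
  have hp_ne_top : ∀ i, p i ≠ ⊤ := fun i => hp i ▸ measure_ne_top P _
  have ha_sum : a 0 + a 1 + a 2 = 1 := by
    rw [ha, ha, ha, ← ENNReal.toReal_add (hp_ne_top 0) (hp_ne_top 1),
      ← ENNReal.toReal_add (ENNReal.add_ne_top.2 ⟨hp_ne_top 0, hp_ne_top 1⟩) (hp_ne_top 2), hsum,
      ENNReal.toReal_one]
  have hexactly_one : P.real {ω | B 0 ω + B 1 ω + B 2 ω = 1} =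
      a 0 * (1 - a 1) * (1 - a 2) + (1 - a 0) * a 1 * (1 - a 2) + (1 - a 0) * (1 - a 1) * a 2 := by
    simpa [Fin.sum_univ_three, Fin.prod_univ_three, add_assoc, mul_assoc] using
      hindep.measureReal_sum_eq_one hmeas h01
  calc (4 / 9 : ℝ≥0∞) = ENNReal.ofReal (4 / 9) := by norm_num [ENNReal.ofReal_div_of_pos]
    _ ≤ P {ω | B 0 ω + B 1 ω + B 2 ω = 1} := by
      rw [ENNReal.ofReal_le_iff_le_toReal (measure_ne_top _ _), ← measureReal_def, hexactly_one]
      exact four_ninths_le_of_sum_eq_one measureReal_nonneg measureReal_nonneg measureReal_nonneg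
        ha_sum
end
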